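/- arXiv:2009.05270 — 2 statements merged into one kernel-verified Lean document; each statement's English description precedes it below -/
import Mathlib

section
/- Let F be a field, q ∈ F, f, g ∈ F[h] and α ∈ F. Then there is an F-algebra isomorphism H_q(f, g) ≅ H_q(f(h−α)+α, g(h−α)) sending x ↦ x, y ↦ y and h ↦ h − α. -/
open Polynomial

/-- The three generators `x`, `y`, `h` of a quantum generalized Heisenberg algebra. -/
inductive QGHAGen : Type
  | x : QGHAGen
  | y : QGHAGen
  | h : QGHAGen

/-- The defining relations of the quantum generalized Heisenberg algebra `H_q(f,g)`:
`h*x = x*f(h)`, `y*h = f(h)*y`, and `y*x - q*(x*y) = g(h)`. -/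
inductive QGHARel (F : Type*) [Field F] (q : F) (f g : F[X]) :
    FreeAlgebra F QGHAGen → FreeAlgebra F QGHAGen → Prop
  | hx : QGHARel F q f g
      (FreeAlgebra.ι F QGHAGen.h * FreeAlgebra.ι F QGHAGen.x)
      (FreeAlgebra.ι F QGHAGen.x * aeval (FreeAlgebra.ι F QGHAGen.h) f)
  | yh : QGHARel F q f g
      (FreeAlgebra.ι F QGHAGen.y * FreeAlgebra.ι F QGHAGen.h)
      (aeval (FreeAlgebra.ι F QGHAGen.h) f * FreeAlgebra.ι F QGHAGen.y)
  | yx : QGHARel F q f g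
      (FreeAlgebra.ι F QGHAGen.y * FreeAlgebra.ι F QGHAGen.x)
      (q • (FreeAlgebra.ι F QGHAGen.x * FreeAlgebra.ι F QGHAGen.y)
        + aeval (FreeAlgebra.ι F QGHAGen.h) g)

/-- The quantum generalized Heisenberg algebra `H_q(f,g)`. -/
def QGHA (F : Type*) [Field F] (q : F) (f g : F[X]) : Type _ :=
  RingQuot (QGHARel F q f g)

namespace QGHA

variable {F : Type*} [Field F] (q : F) (f g : F[X])

instance : Ring (QGHA F q f g) :=
  inferInstanceAs (Ring (RingQuot (QGHARel F q f g)))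

instance : Algebra F (QGHA F q f g) :=
  inferInstanceAs (Algebra F (RingQuot (QGHARel F q f g)))

/-- The generator `x` of `H_q(f,g)`. -/
def x : QGHA F q f g :=
  RingQuot.mkAlgHom F (QGHARel F q f g) (FreeAlgebra.ι F QGHAGen.x)

/-- The generator `y` of `H_q(f,g)`. -/
def y : QGHA F q f g :=
  RingQuot.mkAlgHom F (QGHARel F q f g) (FreeAlgebra.ι F QGHAGen.y)

/-- The generator `h` of `H_q(f,g)`. -/
def h : QGHA F q f g :=
  RingQuot.mkAlgHom F (QGHARel F q f g) (FreeAlgebra.ι F QGHAGen.h)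

end QGHA

/-!
Since `α` is central, substituting `h - α` for `h` turns the defining relations of
`H_q(f(h−α)+α, g(h−α))` into those of `H_q(f,g)`. By the universal property,
`x ↦ x, y ↦ y, h ↦ h − α` and `x ↦ x, y ↦ y, h ↦ h + α` therefore define algebra maps in both
directions, and they are mutually inverse because they are so on generators.
-/

namespace QGHA

variable {F : Type*} [Field F] {A : Type*} [Ring A] [Algebra F A]

structure SatisfiesRelations (q : F) (f g : F[X]) (x y h : A) : Prop where
  h_mul_x : h * x = x * aeval h f
  y_mul_h : y * h = aeval h f * y
  y_mul_x : y * x = q • (x * y) + aeval h g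

theorem satisfiesRelations_comp_sub_iff {q : F} {f g : F[X]} (α : F) {x y h : A} :
    SatisfiesRelations q (f.comp (X - C α) + C α) (g.comp (X - C α)) x y h ↔
      SatisfiesRelations q f g x y (h - algebraMap F A α) := by
  set a := algebraMap F A α
  have hf : aeval h (f.comp (X - C α) + C α) = aeval (h - a) f + a := by
    simp [aeval_comp, a]
  have hg : aeval h (g.comp (X - C α)) = aeval (h - a) g := by
    simp [aeval_comp, a]
  have hx : h * x = x * (aeval (h - a) f + a) ↔ (h - a) * x = x * aeval (h - a) f := by
    rw [sub_mul, sub_eq_iff_eq_add, mul_add, Algebra.commutes]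
  have hy : y * h = (aeval (h - a) f + a) * y ↔ y * (h - a) = aeval (h - a) f * y := by
    rw [mul_sub, sub_eq_iff_eq_add, add_mul, Algebra.commutes]
  constructor
  · rintro ⟨h_mul_x, y_mul_h, y_mul_x⟩
    exact ⟨hx.1 (hf ▸ h_mul_x), hy.1 (hf ▸ y_mul_h), hg ▸ y_mul_x⟩
  · rintro ⟨h_mul_x, y_mul_h, y_mul_x⟩
    exact ⟨hf ▸ hx.2 h_mul_x, hf ▸ hy.2 y_mul_h, hg ▸ y_mul_x⟩

variable {q : F} {f g : F[X]}

theorem satisfiesRelations_gens : SatisfiesRelations q f g (x q f g) (y q f g) (h q f g) := by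
  have key {a b} (r : QGHARel F q f g a b) := RingQuot.mkAlgHom_rel F r
  refine ⟨?_, ?_, ?_⟩ <;>
  [have := key .hx; have := key .yh; have := key .yx] <;>
  · simp only [map_mul, map_add, map_smul, ← aeval_algHom_apply] at this
    exact this

noncomputable def lift {x y h : A} (hr : SatisfiesRelations q f g x y h) :
    QGHA F q f g →ₐ[F] A :=
  RingQuot.liftAlgHom F ⟨FreeAlgebra.lift F (fun | .x => x | .y => y | .h => h), by
    rintro _ _ ⟨⟩ <;>
    simp only [map_mul, map_add, map_smul, FreeAlgebra.lift_ι_apply, ← aeval_algHom_apply,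
      hr.h_mul_x, hr.y_mul_h, hr.y_mul_x]⟩

theorem lift_mkAlgHom_ι {x y h : A} (hr : SatisfiesRelations q f g x y h) (s : QGHAGen) :
    lift hr (RingQuot.mkAlgHom F (QGHARel F q f g) (FreeAlgebra.ι F s)) =
      match s with | .x => x | .y => y | .h => h :=
  (RingQuot.liftAlgHom_mkAlgHom_apply F _ _ _).trans (FreeAlgebra.lift_ι_apply _ _)

section lift

variable {x y h : A} (hr : SatisfiesRelations q f g x y h)

@[simp]
theorem lift_x : lift hr (QGHA.x q f g) = x :=
  lift_mkAlgHom_ι hr .x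

@[simp]
theorem lift_y : lift hr (QGHA.y q f g) = y :=
  lift_mkAlgHom_ι hr .y

@[simp]
theorem lift_h : lift hr (QGHA.h q f g) = h :=
  lift_mkAlgHom_ι hr .h

end lift

@[ext]
theorem algHom_ext {φ ψ : QGHA F q f g →ₐ[F] A} (hx : φ (x q f g) = ψ (x q f g))
    (hy : φ (y q f g) = ψ (y q f g)) (hh : φ (h q f g) = ψ (h q f g)) : φ = ψ := by
  apply RingQuot.ringQuot_ext'
  apply FreeAlgebra.hom_ext
  funext s
  cases s
  exacts [hx, hy, hh]

noncomputable def shiftEquiv (α : F) :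
    QGHA F q f g ≃ₐ[F] QGHA F q (f.comp (X - C α) + C α) (g.comp (X - C α)) :=
  AlgEquiv.ofAlgHom
    (lift ((satisfiesRelations_comp_sub_iff α).1 satisfiesRelations_gens))
    (lift ((satisfiesRelations_comp_sub_iff (h := h q f g + algebraMap F _ α) α).2
      (by rw [add_sub_cancel_right]; exact satisfiesRelations_gens)))
    (by ext <;> simp)
    (by ext <;> simp)

end QGHA

/-- For any field `F`, `q ∈ F`, `f, g ∈ F[h]` and `α ∈ F`, there is an
`F`-algebra isomorphism `H_q(f, g) ≅ H_q(f(h−α)+α, g(h−α))` sending `x ↦ x`, `y ↦ y` and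
`h ↦ h − α`. -/
theorem qgha_iso_shift {F : Type*} [Field F] (q : F) (f g : F[X]) (α : F) :
    ∃ φ : QGHA F q f g ≃ₐ[F] QGHA F q (f.comp (X - C α) + C α) (g.comp (X - C α)),
      φ (QGHA.x q f g) = QGHA.x q (f.comp (X - C α) + C α) (g.comp (X - C α)) ∧
      φ (QGHA.y q f g) = QGHA.y q (f.comp (X - C α) + C α) (g.comp (X - C α)) ∧
      φ (QGHA.h q f g) =
        QGHA.h q (f.comp (X - C α) + C α) (g.comp (X - C α)) - algebraMap F _ α :=
  ⟨QGHA.shiftEquiv α, QGHA.lift_x _, QGHA.lift_y _, QGHA.lift_h _⟩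
end

section
/- Let F be a field, q ∈ F and f, g ∈ F[h] with deg f > 1. If q is not a root of unity, then the center of the quantum generalized Heisenberg algebra H_q(f,g) consists exactly of the scalars F·1. -/
open Polynomial

section Prelim

variable {F : Type*} [Field F] (q : F) (f g : F[X])

/-- `Fc f a = f^{∘a}` -/
noncomputable def Fc : ℕ → F[X]
  | 0 => X
  | a + 1 => (Fc a).comp f

@[simp] lemma Fc_zero : Fc f 0 = X := rfl
@[simp] lemma Fc_succ (a : ℕ) : Fc f (a + 1) = (Fc f a).comp f := rfl

lemma Fc_swap (a : ℕ) : f.comp (Fc f a) = (Fc f a).comp f := by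
  induction a with
  | zero => simp
  | succ a ih => rw [Fc_succ, ← Polynomial.comp_assoc, ih]

lemma natDegree_Fc (a : ℕ) : (Fc f a).natDegree = f.natDegree ^ a := by
  induction a with
  | zero => simp
  | succ a ih => rw [Fc_succ, natDegree_comp, ih, pow_succ]

/-- The tail polynomials in `y^b x = q^b x y^b + Gs b (h) y^{b-1}`. -/
noncomputable def Gs : ℕ → F[X]
  | 0 => 0
  | b + 1 => q ^ b • g + (Gs b).comp f

@[simp] lemma Gs_zero : Gs q f g 0 = 0 := rfl
@[simp] lemma Gs_succ (b : ℕ) : Gs q f g (b + 1) = q ^ b • g + (Gs q f g b).comp f := rfl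

end Prelim

section Rep

variable {F : Type*} [Field F] (q : F) (f g : F[X])

/-- The underlying space of the regular representation: basis `x^a p(h) y^b`. -/
abbrev VV (F : Type*) [Field F] := (ℕ × ℕ) →₀ F[X]

noncomputable def Xop : VV F →ₗ[F] VV F :=
  Finsupp.lsum F fun ab => Finsupp.lsingle (ab.1 + 1, ab.2)

noncomputable def Hop : VV F →ₗ[F] VV F :=
  Finsupp.lsum F fun ab => (Finsupp.lsingle ab).comp (LinearMap.mulLeft F (Fc f ab.1))

noncomputable def yA : ℕ → ℕ → (F[X] →ₗ[F] VV F)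
  | 0, b => (Finsupp.lsingle (0, b + 1)).comp (aeval f).toLinearMap
  | a + 1, b => q • (Xop.comp (yA a b))
      + (Finsupp.lsingle (a, b)).comp (LinearMap.mulLeft F (g.comp (Fc f a)))

noncomputable def Yop : VV F →ₗ[F] VV F :=
  Finsupp.lsum F fun ab => yA q f g ab.1 ab.2

@[simp] lemma Xop_single (a b : ℕ) (p : F[X]) :
    Xop (Finsupp.single (a, b) p) = Finsupp.single (a + 1, b) p := by
  simp [Xop]

@[simp] lemma Hop_single (a b : ℕ) (p : F[X]) :
    Hop f (Finsupp.single (a, b) p) = Finsupp.single (a, b) (Fc f a * p) := by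
  simp [Hop, LinearMap.mulLeft_apply]

lemma Yop_single (a b : ℕ) (p : F[X]) :
    Yop q f g (Finsupp.single (a, b) p) = yA q f g a b p := by
  simp [Yop]

@[simp] lemma Yop_single_zero (b : ℕ) (p : F[X]) :
    Yop q f g (Finsupp.single (0, b) p) = Finsupp.single (0, b + 1) (p.comp f) := by
  simp [Yop_single, yA, comp_eq_aeval]

lemma Yop_single_succ (a b : ℕ) (p : F[X]) :
    Yop q f g (Finsupp.single (a + 1, b) p)
      = q • Xop (Yop q f g (Finsupp.single (a, b) p))
        + Finsupp.single (a, b) (g.comp (Fc f a) * p) := by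
  simp [Yop_single, yA, LinearMap.mulLeft_apply]

/-- Action of a polynomial in `Hop` on a basis vector. -/
lemma aeval_Hop_single (r : F[X]) (a b : ℕ) (p : F[X]) :
    aeval (Hop f) r (Finsupp.single (a, b) p)
      = Finsupp.single (a, b) (r.comp (Fc f a) * p) := by
  induction r using Polynomial.induction_on' with
  | add r s hr hs =>
      rw [map_add, add_comp, add_mul, Finsupp.single_add, LinearMap.add_apply, hr, hs]
  | monomial n c =>
      have hpow : ∀ (m : ℕ) (p : F[X]), ((Hop f) ^ m) (Finsupp.single (a, b) p)
          = Finsupp.single (a, b) ((Fc f a) ^ m * p) := by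
        intro m
        induction m with
        | zero => simp
        | succ m ih =>
            intro p
            rw [pow_succ', Module.End.mul_apply, ih, Hop_single, ← mul_assoc, ← pow_succ']
      rw [aeval_monomial]
      simp only [Module.End.mul_apply, Module.algebraMap_end_apply, hpow]
      rw [← C_mul_X_pow_eq_monomial, mul_comp, C_comp, X_pow_comp, mul_assoc,
        Finsupp.smul_single, smul_eq_C_mul]

lemma aeval_Hop_Xop (t : F[X]) :
    (aeval (Hop f) t : Module.End F (VV F)) ∘ₗ Xop
      = Xop ∘ₗ (aeval (Hop f) (t.comp f) : Module.End F (VV F)) := by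
  apply Finsupp.lhom_ext
  rintro ⟨a, b⟩ p
  simp only [LinearMap.comp_apply, Xop_single, aeval_Hop_single]
  rw [Polynomial.comp_assoc, Fc_swap]
  rfl

lemma Yop_aeval (a : ℕ) : ∀ (s : F[X]) (b : ℕ) (p : F[X]),
    Yop q f g (Finsupp.single (a, b) (s.comp (Fc f a) * p))
      = aeval (Hop f) (s.comp f) (Yop q f g (Finsupp.single (a, b) p)) := by
  induction a with
  | zero =>
      intro s b p
      simp only [Fc_zero, comp_X, Yop_single_zero, aeval_Hop_single, mul_comp]
  | succ a ih =>
      intro s b p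
      have h1 : s.comp (Fc f (a + 1)) = ((s.comp f).comp (Fc f a)) := by
        rw [Polynomial.comp_assoc, Fc_succ, Fc_swap]
      rw [Yop_single_succ, Yop_single_succ, h1, ih, map_add, map_smul]
      have h2 := congrFun (congrArg DFunLike.coe (aeval_Hop_Xop f (s.comp f)))
        (Yop q f g (Finsupp.single (a, b) p))
      simp only [LinearMap.comp_apply] at h2
      rw [h2, aeval_Hop_single]
      ring_nf

lemma rel_one : (Hop f : Module.End F (VV F)) * Xop
    = Xop * (aeval (Hop f) f : Module.End F (VV F)) := by
  apply Finsupp.lhom_ext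
  rintro ⟨a, b⟩ p
  simp only [Module.End.mul_apply, Xop_single, Hop_single, aeval_Hop_single]
  rw [Fc_succ, ← Fc_swap]

lemma rel_two : (Yop q f g : Module.End F (VV F)) * Hop f
    = (aeval (Hop f) f : Module.End F (VV F)) * Yop q f g := by
  apply Finsupp.lhom_ext
  rintro ⟨a, b⟩ p
  simp only [Module.End.mul_apply, Hop_single]
  have := Yop_aeval q f g a X b p
  simp only [comp_X, X_comp] at this
  exact this

lemma rel_three : (Yop q f g : Module.End F (VV F)) * Xop
    = q • ((Xop : Module.End F (VV F)) * Yop q f g)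
      + aeval (Hop f) g := by
  apply Finsupp.lhom_ext
  rintro ⟨a, b⟩ p
  simp only [Module.End.mul_apply, LinearMap.add_apply, LinearMap.smul_apply,
    Xop_single, aeval_Hop_single]
  rw [Yop_single_succ]

noncomputable def preRho : FreeAlgebra F QGHAGen →ₐ[F] Module.End F (VV F) :=
  FreeAlgebra.lift F fun t => match t with
    | QGHAGen.x => Xop
    | QGHAGen.y => Yop q f g
    | QGHAGen.h => Hop f

@[simp] lemma preRho_x : preRho q f g (FreeAlgebra.ι F QGHAGen.x) = Xop :=
  FreeAlgebra.lift_ι_apply _ _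
@[simp] lemma preRho_y : preRho q f g (FreeAlgebra.ι F QGHAGen.y) = Yop q f g :=
  FreeAlgebra.lift_ι_apply _ _
@[simp] lemma preRho_h : preRho q f g (FreeAlgebra.ι F QGHAGen.h) = Hop f :=
  FreeAlgebra.lift_ι_apply _ _

noncomputable def rho : QGHA F q f g →ₐ[F] Module.End F (VV F) :=
  RingQuot.liftAlgHom F ⟨preRho q f g, by
    rintro u v rel
    induction rel with
    | hx => rw [map_mul, map_mul, ← aeval_algHom_apply, preRho_x, preRho_h]
            exact rel_one f
    | yh => rw [map_mul, map_mul, ← aeval_algHom_apply, preRho_y, preRho_h]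
            exact rel_two q f g
    | yx => rw [map_mul, map_add, map_smul, map_mul, ← aeval_algHom_apply,
              preRho_x, preRho_y, preRho_h]
            exact rel_three q f g⟩

end Rep

namespace QGHA

variable {F : Type*} [Field F] (q : F) (f g : F[X])

lemma rel_hx : h q f g * x q f g = x q f g * aeval (h q f g) f := by
  have := RingQuot.mkAlgHom_rel F (QGHARel.hx (F := F) (q := q) (f := f) (g := g))
  simp only [QGHA.x, QGHA.h, map_mul, ← aeval_algHom_apply] at this ⊢; exact this

lemma rel_yh : y q f g * h q f g = aeval (h q f g) f * y q f g := by
  have := RingQuot.mkAlgHom_rel F (QGHARel.yh (F := F) (q := q) (f := f) (g := g))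
  simp only [QGHA.y, QGHA.h, map_mul, ← aeval_algHom_apply] at this ⊢; exact this

lemma rel_yx : y q f g * x q f g = q • (x q f g * y q f g) + aeval (h q f g) g := by
  have := RingQuot.mkAlgHom_rel F (QGHARel.yx (F := F) (q := q) (f := f) (g := g))
  simp only [QGHA.x, QGHA.y, QGHA.h, map_mul, map_add, map_smul,
    ← aeval_algHom_apply] at this ⊢; exact this

lemma hpow_x (n : ℕ) : h q f g ^ n * x q f g = x q f g * (aeval (h q f g) f) ^ n := by
  induction n with
  | zero => simp
  | succ n ih =>
      rw [pow_succ', mul_assoc, ih, ← mul_assoc, rel_hx, mul_assoc, ← pow_succ']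

lemma aeval_mul_x (p : F[X]) :
    aeval (h q f g) p * x q f g = x q f g * aeval (h q f g) (p.comp f) := by
  induction p using Polynomial.induction_on' with
  | add r s hr hs => rw [map_add, add_mul, hr, hs, add_comp, map_add, mul_add]
  | monomial n c =>
      rw [aeval_monomial, ← C_mul_X_pow_eq_monomial, mul_comp, C_comp, X_pow_comp,
        map_mul, aeval_C, map_pow, mul_assoc, hpow_x, ← mul_assoc,
        Algebra.commutes c (x q f g), mul_assoc]

lemma aeval_mul_xpow (p : F[X]) (a : ℕ) :
    aeval (h q f g) p * x q f g ^ a = x q f g ^ a * aeval (h q f g) (p.comp (Fc f a)) := by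
  induction a generalizing p with
  | zero => simp
  | succ a ih =>
      rw [pow_succ', ← mul_assoc, aeval_mul_x, mul_assoc, ih, ← mul_assoc,
        Polynomial.comp_assoc, Fc_swap, ← Polynomial.comp_assoc, Fc_succ,
        Polynomial.comp_assoc]

lemma y_mul_hpow (n : ℕ) : y q f g * h q f g ^ n = (aeval (h q f g) f) ^ n * y q f g := by
  induction n with
  | zero => simp
  | succ n ih =>
      rw [pow_succ, ← mul_assoc, ih, mul_assoc, rel_yh, ← mul_assoc, ← pow_succ]

lemma y_mul_aeval (p : F[X]) :
    y q f g * aeval (h q f g) p = aeval (h q f g) (p.comp f) * y q f g := by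
  induction p using Polynomial.induction_on' with
  | add r s hr hs => rw [map_add, mul_add, hr, hs, add_comp, map_add, add_mul]
  | monomial n c =>
      rw [aeval_monomial, ← C_mul_X_pow_eq_monomial, mul_comp, C_comp, X_pow_comp,
        map_mul, aeval_C, map_pow, ← mul_assoc, ← Algebra.commutes c (y q f g),
        mul_assoc, y_mul_hpow, ← mul_assoc]

lemma ypow_mul_aeval (p : F[X]) (b : ℕ) :
    y q f g ^ b * aeval (h q f g) p
      = aeval (h q f g) (p.comp (Fc f b)) * y q f g ^ b := by
  induction b generalizing p with
  | zero => simp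
  | succ b ih =>
      rw [pow_succ, mul_assoc, y_mul_aeval, ← mul_assoc, ih, mul_assoc,
        Polynomial.comp_assoc, Fc_swap, ← Polynomial.comp_assoc, Fc_succ,
        Polynomial.comp_assoc]

lemma ypow_mul_x (b : ℕ) :
    y q f g ^ (b + 1) * x q f g
      = q ^ (b + 1) • (x q f g * y q f g ^ (b + 1))
        + aeval (h q f g) (Gs q f g (b + 1)) * y q f g ^ b := by
  induction b with
  | zero => simpa [pow_one] using rel_yx q f g
  | succ b ih =>
      have e1 : y q f g ^ (b + 1 + 1) * x q f g
          = y q f g * (y q f g ^ (b + 1) * x q f g) := by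
        rw [pow_succ', mul_assoc]
      have e3 : y q f g * (aeval (h q f g) (Gs q f g (b + 1)) * y q f g ^ b)
          = aeval (h q f g) ((Gs q f g (b + 1)).comp f) * y q f g ^ (b + 1) := by
        rw [← mul_assoc, y_mul_aeval, mul_assoc, ← pow_succ']
      have e2 : y q f g * (q ^ (b + 1) • (x q f g * y q f g ^ (b + 1)))
          = q ^ (b + 1 + 1) • (x q f g * y q f g ^ (b + 1 + 1))
            + q ^ (b + 1) • (aeval (h q f g) g * y q f g ^ (b + 1)) := by
        rw [mul_smul_comm, ← mul_assoc, rel_yx, add_mul, smul_mul_assoc, mul_assoc,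
          ← pow_succ', smul_add, smul_smul, ← pow_succ]
      rw [e1, ih, mul_add, e2, e3, Gs_succ (b := b + 1), map_add, map_smul, add_mul,
        smul_mul_assoc, add_assoc]



noncomputable def sig : VV F →ₗ[F] QGHA F q f g :=
  Finsupp.lsum F fun ab =>
    (LinearMap.mulRight F (y q f g ^ ab.2)).comp
      ((LinearMap.mulLeft F (x q f g ^ ab.1)).comp (aeval (h q f g)).toLinearMap)

@[simp] lemma sig_single (a b : ℕ) (p : F[X]) :
    sig q f g (Finsupp.single (a, b) p)
      = x q f g ^ a * aeval (h q f g) p * y q f g ^ b := by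
  simp [sig]

lemma sig_Xop (v : VV F) : sig q f g (Xop v) = x q f g * sig q f g v := by
  have e : (sig q f g) ∘ₗ Xop = (LinearMap.mulLeft F (x q f g)) ∘ₗ sig q f g := by
    apply Finsupp.lhom_ext
    rintro ⟨a, b⟩ p
    simp [pow_succ', mul_assoc]
  exact DFunLike.congr_fun e v

lemma sig_Hop (v : VV F) : sig q f g (Hop f v) = h q f g * sig q f g v := by
  have e : (sig q f g) ∘ₗ Hop f = (LinearMap.mulLeft F (h q f g)) ∘ₗ sig q f g := by
    apply Finsupp.lhom_ext
    rintro ⟨a, b⟩ p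
    simp only [LinearMap.comp_apply, Hop_single, sig_single, LinearMap.mulLeft_apply]
    have e2 : h q f g * x q f g ^ a = x q f g ^ a * aeval (h q f g) (Fc f a) := by
      simpa using aeval_mul_xpow q f g X a
    rw [← mul_assoc, ← mul_assoc, e2]
    simp [map_mul, mul_assoc]
  exact DFunLike.congr_fun e v

lemma sig_Yop_single (a : ℕ) : ∀ (b : ℕ) (p : F[X]),
    sig q f g (Yop q f g (Finsupp.single (a, b) p))
      = y q f g * sig q f g (Finsupp.single (a, b) p) := by
  induction a with
  | zero =>
      intro b p
      rw [Yop_single_zero]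
      simp only [sig_single, pow_zero, one_mul]
      rw [pow_succ', ← mul_assoc, ← y_mul_aeval, mul_assoc]
  | succ a ih =>
      intro b p
      have e2 : aeval (h q f g) g * x q f g ^ a
          = x q f g ^ a * aeval (h q f g) (g.comp (Fc f a)) := aeval_mul_xpow q f g g a
      rw [Yop_single_succ, map_add, map_smul, sig_Xop, ih]
      simp only [sig_single, pow_succ', mul_assoc]
      rw [← mul_assoc (y q f g) (x q f g), rel_yx, add_mul, smul_mul_assoc,
        mul_assoc (x q f g), ← mul_assoc (aeval (h q f g) g), e2,
        mul_assoc (x q f g ^ a), ← mul_assoc (aeval (h q f g) (g.comp (Fc f a))),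
        ← map_mul]

lemma sig_Yop (v : VV F) : sig q f g (Yop q f g v) = y q f g * sig q f g v := by
  have e : (sig q f g) ∘ₗ Yop q f g = (LinearMap.mulLeft F (y q f g)) ∘ₗ sig q f g := by
    apply Finsupp.lhom_ext
    rintro ⟨a, b⟩ p
    simpa using sig_Yop_single q f g a b p
  exact DFunLike.congr_fun e v


lemma rho_mk (w : FreeAlgebra F QGHAGen) :
    rho q f g (RingQuot.mkAlgHom F (QGHARel F q f g) w) = preRho q f g w :=
  RingQuot.liftAlgHom_mkAlgHom_apply _ _ _ _

@[simp] lemma rho_x : rho q f g (x q f g) = Xop := by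
  unfold x; rw [rho_mk, preRho_x]

@[simp] lemma rho_y : rho q f g (y q f g) = Yop q f g := by
  unfold y; rw [rho_mk, preRho_y]

@[simp] lemma rho_h : rho q f g (h q f g) = Hop f := by
  unfold h; rw [rho_mk, preRho_h]

lemma mul_sig (z : QGHA F q f g) (v : VV F) :
    z * sig q f g v = sig q f g (rho q f g z v) := by
  obtain ⟨w, rfl⟩ := RingQuot.mkAlgHom_surjective F (QGHARel F q f g) z
  induction w using FreeAlgebra.induction generalizing v with
  | grade0 r =>
      rw [AlgHom.commutes, show algebraMap F (RingQuot (QGHARel F q f g)) r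
          = algebraMap F (QGHA F q f g) r from rfl, AlgHom.commutes,
        Module.algebraMap_end_apply, map_smul, Algebra.smul_def]
  | grade1 t =>
      cases t
      · rw [show (RingQuot.mkAlgHom F (QGHARel F q f g)) (FreeAlgebra.ι F QGHAGen.x)
            = x q f g from rfl, rho_x, sig_Xop]
      · rw [show (RingQuot.mkAlgHom F (QGHARel F q f g)) (FreeAlgebra.ι F QGHAGen.y)
            = y q f g from rfl, rho_y, sig_Yop]
      · rw [show (RingQuot.mkAlgHom F (QGHARel F q f g)) (FreeAlgebra.ι F QGHAGen.h)
            = h q f g from rfl, rho_h, sig_Hop]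
  | mul u w ihu ihw =>
      rw [show ((RingQuot.mkAlgHom F (QGHARel F q f g)) (u * w) : (QGHA F q f g)) = @HMul.hMul (QGHA F q f g) (QGHA F q f g) (QGHA F q f g) instHMul ((RingQuot.mkAlgHom F (QGHARel F q f g)) u) ((RingQuot.mkAlgHom F (QGHARel F q f g)) w)
          from map_mul _ u w]
      exact (mul_assoc (G := QGHA F q f g) _ _ _).trans (by
        rw [ihw, ihu]
        exact congrArg (sig q f g) (DFunLike.congr_fun (map_mul (rho q f g) _ _) _).symm)
  | add u w ihu ihw =>
      rw [show ((RingQuot.mkAlgHom F (QGHARel F q f g)) (u + w) : (QGHA F q f g)) = @HAdd.hAdd (QGHA F q f g) (QGHA F q f g) (QGHA F q f g) instHAdd ((RingQuot.mkAlgHom F (QGHARel F q f g)) u) ((RingQuot.mkAlgHom F (QGHARel F q f g)) w)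
          from map_add _ u w]
      exact (add_mul (R := QGHA F q f g) _ _ _).trans (by
        rw [ihu, ihw, ← map_add]
        exact congrArg (sig q f g) (DFunLike.congr_fun (map_add (rho q f g) _ _) _).symm)


/-- The vacuum vector. -/
noncomputable def v0 : VV F := Finsupp.single (0, 0) 1

lemma sig_v0 : sig q f g (v0 (F := F)) = 1 := by
  unfold v0
  rw [sig_single]
  simp

lemma eq_sig_rho_v0 (z : QGHA F q f g) : z = sig q f g (rho q f g z v0) := by
  rw [← mul_sig, sig_v0, mul_one]

lemma Xop_pow_single (n a b : ℕ) (p : F[X]) :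
    ((Xop : Module.End F (VV F)) ^ n) (Finsupp.single (a, b) p)
      = Finsupp.single (a + n, b) p := by
  induction n with
  | zero => simp
  | succ n ih => rw [pow_succ', Module.End.mul_apply, ih, Xop_single, ← add_assoc]

lemma Yop_pow_v0 (b : ℕ) :
    ((Yop q f g : Module.End F (VV F)) ^ b) v0 = Finsupp.single (0, b) 1 := by
  induction b with
  | zero => simp [v0]
  | succ b ih => rw [pow_succ', Module.End.mul_apply, ih, Yop_single_zero, one_comp]

lemma rho_basis (a b : ℕ) (p : F[X]) :
    rho q f g (x q f g ^ a * aeval (h q f g) p * y q f g ^ b) v0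
      = Finsupp.single (a, b) p := by
  rw [map_mul, map_mul, map_pow, map_pow, rho_x, rho_y, ← aeval_algHom_apply, rho_h,
    Module.End.mul_apply, Module.End.mul_apply, Yop_pow_v0, aeval_Hop_single,
    Xop_pow_single]
  simp

noncomputable def tau : VV F →ₗ[F] VV F where
  toFun v := rho q f g (sig q f g v) v0
  map_add' u v := by simp only [map_add, LinearMap.add_apply]
  map_smul' c v := by simp only [map_smul, LinearMap.smul_apply, RingHom.id_apply]

lemma tau_eq_id : tau q f g = (LinearMap.id : VV F →ₗ[F] VV F) := by
  apply Finsupp.lhom_ext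
  rintro ⟨a, b⟩ p
  show rho q f g (sig q f g (Finsupp.single (a, b) p)) v0 = _
  rw [sig_single, rho_basis]
  rfl

lemma rho_sig_v0 (v : VV F) : rho q f g (sig q f g v) v0 = v :=
  DFunLike.congr_fun (tau_eq_id q f g) v

lemma sig_injective : Function.Injective (sig q f g) := by
  intro u v huv
  rw [← rho_sig_v0 q f g u, ← rho_sig_v0 q f g v, huv]


/-- Right multiplication by `h` in normal form. -/
noncomputable def Rh : VV F →ₗ[F] VV F :=
  Finsupp.lsum F fun ab => (Finsupp.lsingle ab).comp (LinearMap.mulLeft F (Fc f ab.2))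

@[simp] lemma Rh_single (a b : ℕ) (p : F[X]) :
    Rh f (Finsupp.single (a, b) p) = Finsupp.single (a, b) (Fc f b * p) := by
  simp [Rh, LinearMap.mulLeft_apply]

lemma sig_Rh (v : VV F) : sig q f g (Rh f v) = sig q f g v * h q f g := by
  have e : (sig q f g) ∘ₗ Rh f
      = (LinearMap.mulRight F (h q f g)) ∘ₗ sig q f g := by
    apply Finsupp.lhom_ext
    rintro ⟨a, b⟩ p
    simp only [LinearMap.comp_apply, Rh_single, sig_single, LinearMap.mulRight_apply]
    have e2 : y q f g ^ b * h q f g = aeval (h q f g) (Fc f b) * y q f g ^ b := by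
      simpa using ypow_mul_aeval q f g X b
    conv_rhs => rw [mul_assoc, e2, ← mul_assoc, mul_assoc (x q f g ^ a), ← map_mul,
      mul_comm p (Fc f b)]
  exact DFunLike.congr_fun e v

/-- Right multiplication by `x` in normal form. -/
noncomputable def Rx : VV F →ₗ[F] VV F :=
  Finsupp.lsum F fun ab =>
    q ^ ab.2 • ((Finsupp.lsingle (ab.1 + 1, ab.2)).comp (aeval f).toLinearMap)
      + (Finsupp.lsingle (ab.1, ab.2 - 1)).comp (LinearMap.mulLeft F (Gs q f g ab.2))

lemma Rx_single (a b : ℕ) (p : F[X]) :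
    Rx q f g (Finsupp.single (a, b) p)
      = q ^ b • Finsupp.single (a + 1, b) (p.comp f)
        + Finsupp.single (a, b - 1) (Gs q f g b * p) := by
  simp [Rx, LinearMap.mulLeft_apply, comp_eq_aeval]

lemma sig_Rx (v : VV F) : sig q f g (Rx q f g v) = sig q f g v * x q f g := by
  have e : (sig q f g) ∘ₗ Rx q f g
      = (LinearMap.mulRight F (x q f g)) ∘ₗ sig q f g := by
    apply Finsupp.lhom_ext
    rintro ⟨a, b⟩ p
    simp only [LinearMap.comp_apply, Rx_single, sig_single, LinearMap.mulRight_apply,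
      map_add, map_smul, sig_single]
    cases b with
    | zero =>
        simp only [Gs_zero, zero_mul, mul_zero, Finsupp.single_zero, map_zero, add_zero,
          pow_zero, one_smul, mul_one]
        conv_rhs => rw [mul_assoc, aeval_mul_x, ← mul_assoc, ← pow_succ]
    | succ b =>
        rw [Nat.add_sub_cancel]
        rw [mul_assoc (x q f g ^ a * aeval (h q f g) p), ypow_mul_x, mul_add,
          mul_smul_comm]
        congr 1
        · rw [← mul_assoc, mul_assoc (x q f g ^ a), aeval_mul_x,
            ← mul_assoc (x q f g ^ a), ← pow_succ]
        · conv_rhs => rw [mul_assoc, ← mul_assoc (aeval (h q f g) p), ← map_mul,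
            mul_comm p (Gs q f g (b + 1))]
          rw [mul_assoc]
  exact DFunLike.congr_fun e v


lemma Hop_apply (w : VV F) (A B : ℕ) : Hop f w (A, B) = Fc f A * w (A, B) := by
  induction w using Finsupp.induction_linear with
  | zero => simp
  | add u v hu hv => rw [map_add, Finsupp.add_apply, hu, hv, Finsupp.add_apply, mul_add]
  | single ab p =>
      obtain ⟨a, b⟩ := ab
      rw [Hop_single]
      simp only [Finsupp.single_apply]
      split_ifs with hc
      · obtain ⟨rfl, rfl⟩ := Prod.mk.injEq .. ▸ hc
        rfl
      · rw [mul_zero]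

lemma Rh_apply (w : VV F) (A B : ℕ) : Rh f w (A, B) = Fc f B * w (A, B) := by
  induction w using Finsupp.induction_linear with
  | zero => simp
  | add u v hu hv => rw [map_add, Finsupp.add_apply, hu, hv, Finsupp.add_apply, mul_add]
  | single ab p =>
      obtain ⟨a, b⟩ := ab
      rw [Rh_single]
      simp only [Finsupp.single_apply]
      split_ifs with hc
      · obtain ⟨rfl, rfl⟩ := Prod.mk.injEq .. ▸ hc
        rfl
      · rw [mul_zero]

lemma Xop_apply (w : VV F) (A B : ℕ) : Xop w (A + 1, B) = w (A, B) := by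
  induction w using Finsupp.induction_linear with
  | zero => simp
  | add u v hu hv => rw [map_add, Finsupp.add_apply, hu, hv, Finsupp.add_apply]
  | single ab p =>
      obtain ⟨a, b⟩ := ab
      rw [Xop_single]
      simp only [Finsupp.single_apply, Prod.mk.injEq, add_left_inj]

lemma Rx_apply (w : VV F) (A B : ℕ) :
    Rx q f g w (A + 1, B)
      = q ^ B • (w (A, B)).comp f + Gs q f g (B + 1) * w (A + 1, B + 1) := by
  induction w using Finsupp.induction_linear with
  | zero => simp
  | add u v hu hv =>
      rw [map_add, Finsupp.add_apply, hu, hv, Finsupp.add_apply, Finsupp.add_apply,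
        add_comp, smul_add, mul_add]
      ring
  | single ab p =>
      obtain ⟨a, b⟩ := ab
      rw [Rx_single]
      simp only [Finsupp.add_apply, Finsupp.smul_apply, Finsupp.single_apply,
        Prod.mk.injEq, add_left_inj]
      rcases b with _ | b
      · simp only [Gs_zero, zero_mul]
        split_ifs <;> simp_all
      · rw [Nat.add_sub_cancel]
        split_ifs <;> simp_all

end QGHA


/-- If `deg f > 1` and `q` is not a root of unity, then the center of
`H_q(f,g)` consists exactly of the scalars `F·1` (the bottom subalgebra). -/
theorem qgha_center_trivial {F : Type*} [Field F] (q : F) (f g : F[X])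
    (hf : 1 < f.degree) (hq : ∀ n : ℕ, 0 < n → q ^ n ≠ 1) :
    Subalgebra.center F (QGHA F q f g) = ⊥ := by
  have hf0 : f ≠ 0 := by rintro rfl; simp at hf
  have hdf : 2 ≤ f.natDegree := by
    have h1 := hf
    rw [degree_eq_natDegree hf0] at h1
    exact_mod_cast h1
  have hFc : ∀ A B : ℕ, A ≠ B → Fc f A ≠ Fc f B := by
    intro A B hAB hE
    apply hAB
    apply Nat.pow_right_injective hdf
    show f.natDegree ^ A = f.natDegree ^ B
    rw [← natDegree_Fc, ← natDegree_Fc, hE]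
  apply le_antisymm _ bot_le
  intro z hz
  rw [Subalgebra.mem_center_iff] at hz
  set w := rho q f g z QGHA.v0 with hw
  have hzw : z = QGHA.sig q f g w := QGHA.eq_sig_rho_v0 q f g z
  have hH : Hop f w = QGHA.Rh f w := by
    apply QGHA.sig_injective q f g
    rw [QGHA.sig_Hop, QGHA.sig_Rh, ← hzw]
    exact hz _
  have hX : Xop w = QGHA.Rx q f g w := by
    apply QGHA.sig_injective q f g
    rw [QGHA.sig_Xop, QGHA.sig_Rx, ← hzw]
    exact hz _
  -- off-diagonal components vanish
  have diag : ∀ A B : ℕ, A ≠ B → w (A, B) = 0 := by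
    intro A B hAB
    by_contra hne
    have h1 : Fc f A * w (A, B) = Fc f B * w (A, B) := by
      rw [← QGHA.Hop_apply, ← QGHA.Rh_apply, hH]
    exact hFc A B hAB (mul_right_cancel₀ hne h1)
  -- the recursion from commuting with x
  have step : ∀ A : ℕ,
      q ^ A • (w (A, A)).comp f + Gs q f g (A + 1) * w (A + 1, A + 1) = w (A, A) := by
    intro A
    rw [← QGHA.Rx_apply, ← hX, QGHA.Xop_apply]
  -- a bound on the support
  obtain ⟨N, hN⟩ : ∃ N : ℕ, ∀ a b : ℕ, N ≤ a → w (a, b) = 0 := by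
    refine ⟨(w.support.sup fun ab => ab.1) + 1, fun a b hab => ?_⟩
    by_contra hne
    have : (a, b) ∈ w.support := Finsupp.mem_support_iff.2 hne
    have h3 : a ≤ w.support.sup fun ab => ab.1 :=
      Finset.le_sup (f := fun ab : ℕ × ℕ => ab.1) this
    omega
  -- diagonal entries vanish above level one
  have key : ∀ k a : ℕ, N ≤ a + k → 1 ≤ a → w (a, a) = 0 := by
    intro k
    induction k with
    | zero => intro a h1 _; exact hN a a (by omega)
    | succ k ih =>
        intro a h1 ha
        by_cases h2 : N ≤ a + k
        · exact ih a h2 ha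
        · have hnext : w (a + 1, a + 1) = 0 := ih (a + 1) (by omega) (by omega)
          have hstep := step a
          rw [hnext, mul_zero, add_zero] at hstep
          set u := w (a, a) with hu
          by_contra hune
          have hqa : q ^ a ≠ 0 := by
            intro h0
            rw [h0, zero_smul] at hstep
            exact hune hstep.symm
          have hdeg : u.natDegree * f.natDegree = u.natDegree := by
            have hcomp : (u.comp f) ≠ 0 := by
              intro h0
              rw [h0, smul_zero] at hstep
              exact hune hstep.symm
            calc u.natDegree * f.natDegree = (u.comp f).natDegree := (natDegree_comp).symm
              _ = (q ^ a • u.comp f).natDegree := by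
                  rw [smul_eq_C_mul, natDegree_C_mul hqa]
              _ = u.natDegree := by rw [hstep]
          have hu0 : u.natDegree = 0 := by nlinarith [u.natDegree.zero_le]
          obtain ⟨c, hc⟩ := natDegree_eq_zero.1 hu0
          have hcne : c ≠ 0 := by rintro rfl; rw [← hc] at hune; simp at hune
          rw [← hc, C_comp, smul_C] at hstep
          have : q ^ a * c = c := by
            have := C_injective hstep
            simpa [smul_eq_mul] using this
          exact hq a ha (by field_simp at this; tauto)
  have diag0 : ∀ a : ℕ, 1 ≤ a → w (a, a) = 0 := fun a ha => key N a (by omega) ha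
  -- the (0,0) entry is constant
  have h00 : (w (0, 0)).comp f = w (0, 0) := by
    have hstep := step 0
    rw [diag0 1 le_rfl, mul_zero, add_zero, pow_zero, one_smul] at hstep
    exact hstep
  have h00deg : (w (0, 0)).natDegree = 0 := by
    by_cases hz0 : w (0, 0) = 0
    · rw [hz0]; simp
    · have : (w (0, 0)).natDegree * f.natDegree = (w (0, 0)).natDegree := by
        rw [← natDegree_comp, h00]
      nlinarith [(w (0, 0)).natDegree.zero_le]
  obtain ⟨c, hc⟩ := natDegree_eq_zero.1 h00deg
  have hweq : w = Finsupp.single (0, 0) (C c) := by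
    apply Finsupp.ext
    intro ab
    obtain ⟨A, B⟩ := ab
    rcases eq_or_ne (A, B) ((0, 0) : ℕ × ℕ) with hE | hE
    · rw [hE, Finsupp.single_apply, if_pos rfl, hc]
    · rw [Finsupp.single_apply, if_neg (by exact fun hh => hE hh.symm)]
      rcases eq_or_ne A B with rfl | hAB
      · have : 1 ≤ A := by
          rcases Nat.eq_zero_or_pos A with rfl | hA
          · exact absurd rfl hE
          · exact hA
        exact diag0 A this
      · exact diag A B hAB
  rw [Algebra.mem_bot]
  refine ⟨c, ?_⟩
  rw [hzw, hweq, QGHA.sig_single, aeval_C, pow_zero, pow_zero, one_mul, mul_one]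
end
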